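/- Fix integers r ≥ 3 and d ≥ 2. The toric ideal I_{G_{r,d}} ⊆ k[a_1,…,a_d,b_1,…,b_d,e_1,…,e_{2r−2}] is equal to the ideal generated by the set {a_i b_j − b_i a_j : 1 ≤ i < j ≤ d} ∪ {a_i e_2 e_4 ⋯ e_{2r−2} − b_i e_1 e_3 e_5 ⋯ e_{2r−3} : 1 ≤ i ≤ d}. -/

import Mathlib

open MvPolynomial

/-- The vertices of the graph `G_{r,d}`: `x₁, x₂`, the `y`-vertices `y_1, …, y_d`
(`Vert.y i` is `y_{i+1}`), and the path vertices `z_1, …, z_{2r-3}`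
(`Vert.z j` is `z_{j+1}`). -/
inductive Vert (d r : ℕ) : Type where
  | x1 : Vert d r
  | x2 : Vert d r
  | y : Fin d → Vert d r
  | z : Fin (2 * r - 3) → Vert d r
deriving DecidableEq

/-- The edge variables of `G_{r,d}`: `a_1, …, a_d`, `b_1, …, b_d` and
`e_1, …, e_{2r-2}` (0-indexed: `EVar.a i` is `a_{i+1}`, etc.). -/
inductive EVar (d r : ℕ) : Type where
  | a : Fin d → EVar d r
  | b : Fin d → EVar d r
  | e : Fin (2 * r - 2) → EVar d r
deriving DecidableEq

/-- The image of each edge variable of `G_{r,d}` under `φ_G`: the product of the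
variables of the two endpoints of the corresponding edge.  Here
`a_i = {x₁, y_i}`, `b_i = {x₂, y_i}`, `e_1 = {x₁, z_1}`,
`e_j = {z_{j-1}, z_j}` for `2 ≤ j ≤ 2r-3` and `e_{2r-2} = {z_{2r-3}, x₂}`. -/
noncomputable def edgeImage (k : Type) [Field k] (d r : ℕ) :
    EVar d r → MvPolynomial (Vert d r) k
  | .a i => X Vert.x1 * X (Vert.y i)
  | .b i => X Vert.x2 * X (Vert.y i)
  | .e t =>
      (if h : t.val = 0 then X Vert.x1
        else X (Vert.z ⟨t.val - 1, by have := t.isLt; omega⟩)) *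
      (if h : t.val = 2 * r - 3 then X Vert.x2
        else X (Vert.z ⟨t.val, by have := t.isLt; omega⟩))

/-- The toric ideal `I_{G_{r,d}}` of the graph `G_{r,d}`, viewed in the polynomial
ring `k[a_1,…,a_d,b_1,…,b_d,e_1,…,e_{2r-2}]`: the kernel of the `k`-algebra map
`φ : k[a_1,…,e_{2r-2}] → k[x₁,x₂,y_1,…,y_d,z_1,…,z_{2r-3}]` sending each edge
variable to the product of its endpoint variables. -/
noncomputable def toricIdealGrd (k : Type) [Field k] (d r : ℕ) :
    Ideal (MvPolynomial (EVar d r) k) :=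
  RingHom.ker (MvPolynomial.aeval (edgeImage k d r)).toRingHom

/-- The monomial `e_2 e_4 ⋯ e_{2r-2}` (product of the even-indexed `e`-variables;
in the 0-indexed encoding these are the `EVar.e t` with `t.val` odd). -/
noncomputable def evenEProd (k : Type) [Field k] (d r : ℕ) : MvPolynomial (EVar d r) k :=
  ∏ t ∈ Finset.univ.filter (fun t : Fin (2 * r - 2) => t.val % 2 = 1), X (EVar.e t)

/-- The monomial `e_1 e_3 ⋯ e_{2r-3}` (product of the odd-indexed `e`-variables;
in the 0-indexed encoding these are the `EVar.e t` with `t.val` even). -/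
noncomputable def oddEProd (k : Type) [Field k] (d r : ℕ) : MvPolynomial (EVar d r) k :=
  ∏ t ∈ Finset.univ.filter (fun t : Fin (2 * r - 2) => t.val % 2 = 0), X (EVar.e t)

/-!
The toric ideal of a monomial map `x^m ↦ x^{Φ m}` is spanned by the binomials `x^m - x^{m'}`
with `Φ m = Φ m'`, and such a binomial lies in an ideal `J` as soon as, whenever `m ≠ m'`, some
binomial `x^v - x^{v'}` of `J` with `v ≤ m` moves `m` to a monomial sharing a variable with
`m'`: cancelling that variable, induction on `m'` finishes.

For `G_{r,d}`, `Φ m` is the vertex-degree vector of the edge multiset `m`. If `Φ m = Φ m'`, the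
degrees of the path vertices force `m' - m` to alternate `c, -c, c, …` along `e_1, …, e_{2r-2}`.
If `c > 0`, the degree of `x₁` gives an `a_i` in `m`, and `m` contains every even-indexed `e`,
so `a_i e_2 ⋯ e_{2r-2} ↦ b_i e_1 ⋯ e_{2r-3}` produces `e_1`, which `m'` contains; `c < 0` is
symmetric, through `x₂`. If `c = 0`, the `a`-degrees of `m` and `m'` have the same sum but differ,
so `m` contains `a_j b_i` with `m'` richer in `a_i`, and `a_j b_i ↦ b_j a_i` applies.
-/

theorem Fin.sum_ite_val_eq {M : Type*} [AddCommMonoid M] {n j : ℕ} (hj : j < n)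
    (f : Fin n → M) : ∑ x : Fin n, (if (x : ℕ) = j then f x else 0) = f ⟨j, hj⟩ := by
  rw [Fintype.sum_eq_single ⟨j, hj⟩ fun x hx => if_neg fun h => hx (Fin.ext h), if_pos rfl]

theorem Finsupp.single_add_single_le {σ : Type*} {u u' : σ} {m : σ →₀ ℕ} (huu' : u ≠ u')
    (hu : 0 < m u) (hu' : 0 < m u') : Finsupp.single u 1 + Finsupp.single u' 1 ≤ m := by
  classical
  intro x
  simp only [Finsupp.add_apply, Finsupp.single_apply]
  split_ifs <;> subst_vars <;> simp_all <;> omega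

theorem exists_lt_of_sum_eq_of_ne {ι M : Type*} [Fintype ι] [AddCommMonoid M] [LinearOrder M]
    [IsOrderedCancelAddMonoid M] {f g : ι → M} (hsum : ∑ i, f i = ∑ i, g i) (hne : f ≠ g) :
    ∃ i, f i < g i := by
  by_contra! hle
  exact hne <| funext fun i =>
    ((Finset.sum_eq_sum_iff_of_le fun i _ => hle i).1 hsum.symm i (Finset.mem_univ i)).symm

namespace MvPolynomial

variable {R σ τ : Type*} [CommRing R] (w : σ → τ →₀ ℕ)

theorem aeval_monomial_monomial (m : σ →₀ ℕ) (c : R) :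
    aeval (fun u => monomial (w u) (1 : R)) (monomial m c) =
      monomial (Finsupp.linearCombination ℕ w m) c := by
  simp only [aeval_monomial, Finsupp.linearCombination_apply, algebraMap_eq, monomial_pow,
    one_pow]
  rw [monomial_finsupp_sum_index]

theorem X_mul_monomial_one (u : σ) (v : σ →₀ ℕ) :
    X u * monomial v (1 : R) = monomial (Finsupp.single u 1 + v) 1 := by
  rw [monomial_single_add, pow_one]

theorem monomial_sub_monomial_mem_ker {v v' : σ →₀ ℕ}
    (h : Finsupp.linearCombination ℕ w v = Finsupp.linearCombination ℕ w v') :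
    monomial v (1 : R) - monomial v' 1 ∈ RingHom.ker (aeval fun u => monomial (w u) (1 : R)) := by
  rw [RingHom.mem_ker, map_sub, aeval_monomial_monomial, aeval_monomial_monomial, h, sub_self]

theorem monomial_add_sub_monomial_add_mem {J : Ideal (MvPolynomial σ R)} (u : σ →₀ ℕ)
    {v v' : σ →₀ ℕ} (h : monomial v (1 : R) - monomial v' 1 ∈ J) :
    monomial (u + v) (1 : R) - monomial (u + v') 1 ∈ J := by
  rw [← one_mul (1 : R), ← monomial_mul, ← monomial_mul, ← mul_sub]
  exact J.mul_mem_left _ h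

theorem ker_aeval_monomial_le {J : Ideal (MvPolynomial σ R)}
    (hJ : ∀ m m', Finsupp.linearCombination ℕ w m = Finsupp.linearCombination ℕ w m' →
      monomial m (1 : R) - monomial m' 1 ∈ J) :
    RingHom.ker (aeval fun u => monomial (w u) (1 : R)) ≤ J := by
  set φ : MvPolynomial σ R →ₐ[R] MvPolynomial τ R := aeval fun u => monomial (w u) 1
  -- `L` replaces each monomial `x^n` by `x^{ψ n}` for a fixed preimage `ψ n` of `n`, so
  -- `p - L (φ p)` is a combination of binomials inside the fibres of `linearCombination ℕ w`.
  set ψ := Function.invFun (Finsupp.linearCombination ℕ w)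
  set L := (basisMonomials τ R).constr R fun n => monomial (ψ n) (1 : R)
  have hL (n : τ →₀ ℕ) (c : R) : L (monomial n c) = monomial (ψ n) c := by
    rw [← mul_one c, ← smul_eq_mul, ← smul_monomial, map_smul,
      show monomial n (1 : R) = basisMonomials τ R n by simp, Module.Basis.constr_basis,
      smul_monomial]
  have key (p : MvPolynomial σ R) : p - L (φ p) ∈ J := by
    induction p using MvPolynomial.induction_on' with
    | monomial m c =>
      rw [aeval_monomial_monomial, hL, ← mul_one c, ← C_mul_monomial, ← C_mul_monomial,
        ← mul_sub]
      exact J.mul_mem_left _ (hJ _ _ (Function.invFun_eq ⟨m, rfl⟩).symm)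
    | add p q hp hq =>
      rw [map_add, map_add, add_sub_add_comm]
      exact J.add_mem hp hq
  intro p hp
  simpa [RingHom.mem_ker.1 hp] using key p

def HasMoveToward (J : Ideal (MvPolynomial σ R)) (m m' : σ →₀ ℕ) : Prop :=
  ∃ v ≤ m, ∃ v', Finsupp.linearCombination ℕ w v = Finsupp.linearCombination ℕ w v' ∧
    monomial v (1 : R) - monomial v' 1 ∈ J ∧ ∃ u, 0 < v' u ∧ 0 < m' u

theorem monomial_sub_monomial_mem_of_hasMoveToward {J : Ideal (MvPolynomial σ R)}
    (hmove : ∀ m m', Finsupp.linearCombination ℕ w m = Finsupp.linearCombination ℕ w m' →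
      m ≠ m' → HasMoveToward w J m m')
    (m m' : σ →₀ ℕ)
    (h : Finsupp.linearCombination ℕ w m = Finsupp.linearCombination ℕ w m') :
    monomial m (1 : R) - monomial m' 1 ∈ J := by
  induction m' using WellFoundedLT.induction generalizing m with
  | ind m' ih =>
    by_cases hm : m = m'
    · rw [hm, sub_self]
      exact J.zero_mem
    obtain ⟨v, hvm, v', hvv', hv, u, hv'u, hm'u⟩ := hmove m m' h hm
    set Φ := Finsupp.linearCombination ℕ w
    set m₁ := m - v + v'
    set n₁ := m₁ - Finsupp.single u 1
    set n' := m' - Finsupp.single u 1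
    have hm₁ : Finsupp.single u 1 + n₁ = m₁ :=
      add_tsub_cancel_of_le <| Finsupp.single_le_iff.2 <| hv'u.trans_le (by simp [m₁])
    have hm' : Finsupp.single u 1 + n' = m' :=
      add_tsub_cancel_of_le (Finsupp.single_le_iff.2 hm'u)
    have hmove : monomial m (1 : R) - monomial m₁ 1 ∈ J := by
      simpa only [tsub_add_cancel_of_le hvm] using monomial_add_sub_monomial_add_mem (m - v) hv
    have hΦ : Φ n₁ = Φ n' := by
      refine add_left_cancel (a := Φ (Finsupp.single u 1)) ?_
      rw [← map_add, ← map_add, hm₁, hm', ← h, map_add, ← hvv', ← map_add,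
        tsub_add_cancel_of_le hvm]
    have hn' : n' < m' := by
      conv_rhs => rw [← hm']
      exact lt_add_of_pos_left _ (pos_iff_ne_zero.2 (by simp))
    have hcancel : monomial m₁ (1 : R) - monomial m' 1 ∈ J := by
      rw [← hm₁, ← hm']
      exact monomial_add_sub_monomial_add_mem _ (ih n' hn' n₁ hΦ)
    simpa using J.add_mem hmove hcancel

end MvPolynomial

namespace ToricGrd

variable {d r : ℕ}

noncomputable def edgeExp : EVar d r → Vert d r →₀ ℕ
  | .a i => Finsupp.single .x1 1 + Finsupp.single (.y i) 1
  | .b i => Finsupp.single .x2 1 + Finsupp.single (.y i) 1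
  | .e t =>
      Finsupp.single (if t.val = 0 then .x1 else .z ⟨t.val - 1, by omega⟩) 1 +
      Finsupp.single (if h : t.val = 2 * r - 3 then .x2 else .z ⟨t.val, by omega⟩) 1

theorem edgeImage_eq (k : Type) [Field k] :
    edgeImage k d r = fun u => monomial (edgeExp u) 1 := by
  funext u
  cases u <;> simp only [edgeImage, edgeExp] <;> (try split_ifs) <;>
    rw [X, X, monomial_mul, one_mul]

noncomputable abbrev vertexDegrees (m : EVar d r →₀ ℕ) : Vert d r →₀ ℕ :=
  Finsupp.linearCombination ℕ edgeExp m

def evarEquiv (d r : ℕ) : EVar d r ≃ Fin d ⊕ Fin d ⊕ Fin (2 * r - 2) where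
  toFun
    | .a i => .inl i
    | .b i => .inr (.inl i)
    | .e t => .inr (.inr t)
  invFun
    | .inl i => .a i
    | .inr (.inl i) => .b i
    | .inr (.inr t) => .e t
  left_inv u := by cases u <;> rfl
  right_inv x := by rcases x with i | i | t <;> rfl

instance : Fintype (EVar d r) := Fintype.ofEquiv _ (evarEquiv d r).symm

theorem sum_evar {M : Type*} [AddCommMonoid M] (f : EVar d r → M) :
    ∑ u, f u = ∑ i, f (.a i) + ∑ i, f (.b i) + ∑ t, f (.e t) := by
  rw [← (evarEquiv d r).symm.sum_comp, Fintype.sum_sum_type, Fintype.sum_sum_type, add_assoc]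
  rfl

theorem vertexDegrees_apply (m : EVar d r →₀ ℕ) (v : Vert d r) :
    vertexDegrees m v = ∑ u, m u * edgeExp u v := by
  simp [Finsupp.linearCombination_apply, Finsupp.sum_fintype]

theorem edgeExp_a (i : Fin d) :
    edgeExp (r := r) (.a i) = Finsupp.single .x1 1 + Finsupp.single (.y i) 1 := rfl

theorem edgeExp_b (i : Fin d) :
    edgeExp (r := r) (.b i) = Finsupp.single .x2 1 + Finsupp.single (.y i) 1 := rfl

theorem edgeExp_e_x1 (t : Fin (2 * r - 2)) :
    edgeExp (d := d) (.e t) .x1 = if (t : ℕ) = 0 then 1 else 0 := by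
  simp only [edgeExp, Finsupp.add_apply, Finsupp.single_apply]
  split_ifs <;> simp_all

theorem edgeExp_e_x2 (t : Fin (2 * r - 2)) :
    edgeExp (d := d) (.e t) .x2 = if (t : ℕ) = 2 * r - 3 then 1 else 0 := by
  simp only [edgeExp, Finsupp.add_apply, Finsupp.single_apply]
  split_ifs <;> simp_all

theorem edgeExp_e_y (t : Fin (2 * r - 2)) (i : Fin d) : edgeExp (.e t) (.y i) = 0 := by
  simp only [edgeExp, Finsupp.add_apply, Finsupp.single_apply]
  split_ifs <;> simp_all

theorem edgeExp_e_z (t : Fin (2 * r - 2)) (s : Fin (2 * r - 3)) :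
    edgeExp (d := d) (.e t) (.z s) =
      (if (t : ℕ) = s + 1 then 1 else 0) + (if (t : ℕ) = s then 1 else 0) := by
  simp only [edgeExp, Finsupp.add_apply, Finsupp.single_apply]
  split_ifs <;> simp_all [Fin.ext_iff] <;> omega

theorem vertexDegrees_y (m : EVar d r →₀ ℕ) (i : Fin d) :
    vertexDegrees m (.y i) = m (.a i) + m (.b i) := by
  simp [vertexDegrees_apply, sum_evar, edgeExp_a, edgeExp_b, edgeExp_e_y, Finsupp.single_apply]

theorem vertexDegrees_x1 (hr : 2 ≤ r) (m : EVar d r →₀ ℕ) :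
    vertexDegrees m .x1 = ∑ i, m (.a i) + m (.e ⟨0, by omega⟩) := by
  simpa [vertexDegrees_apply, sum_evar, edgeExp_a, edgeExp_b, edgeExp_e_x1] using
    Fin.sum_ite_val_eq _ _

theorem vertexDegrees_x2 (hr : 2 ≤ r) (m : EVar d r →₀ ℕ) :
    vertexDegrees m .x2 = ∑ i, m (.b i) + m (.e ⟨2 * r - 3, by omega⟩) := by
  simpa [vertexDegrees_apply, sum_evar, edgeExp_a, edgeExp_b, edgeExp_e_x2] using
    Fin.sum_ite_val_eq _ _

theorem vertexDegrees_z (m : EVar d r →₀ ℕ) (s : Fin (2 * r - 3)) :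
    vertexDegrees m (.z s) = m (.e ⟨s, by omega⟩) + m (.e ⟨s + 1, by omega⟩) := by
  simp only [vertexDegrees_apply, sum_evar, edgeExp_a, edgeExp_b, edgeExp_e_z, Finsupp.add_apply,
    Finsupp.single_apply, reduceCtorEq, if_false, add_zero, mul_zero, Finset.sum_const_zero,
    zero_add, mul_add, mul_ite, mul_one, Finset.sum_add_distrib]
  rw [Fin.sum_ite_val_eq, Fin.sum_ite_val_eq, add_comm]

theorem vertexDegrees_eq_iff (hr : 2 ≤ r) {m m' : EVar d r →₀ ℕ} :
    vertexDegrees m = vertexDegrees m' ↔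
      ∑ i, m (.a i) + m (.e ⟨0, by omega⟩) = ∑ i, m' (.a i) + m' (.e ⟨0, by omega⟩) ∧
      ∑ i, m (.b i) + m (.e ⟨2 * r - 3, by omega⟩) =
        ∑ i, m' (.b i) + m' (.e ⟨2 * r - 3, by omega⟩) ∧
      (∀ i, m (.a i) + m (.b i) = m' (.a i) + m' (.b i)) ∧
      ∀ s : Fin (2 * r - 3), m (.e ⟨s, by omega⟩) + m (.e ⟨s + 1, by omega⟩) =
        m' (.e ⟨s, by omega⟩) + m' (.e ⟨s + 1, by omega⟩) := by
  simp only [← vertexDegrees_x1 hr, ← vertexDegrees_x2 hr, ← vertexDegrees_y,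
    ← vertexDegrees_z]
  refine ⟨fun h => ⟨by rw [h], by rw [h], fun i => by rw [h], fun s => by rw [h]⟩, ?_⟩
  rintro ⟨h1, h2, hy, hz⟩
  ext v
  cases v <;> simp only [*]

/-- Along the path, `m' - m` alternates `c, -c, c, …` with `c = m' e₀ - m e₀`
(written additively, to stay in `ℕ`). -/
theorem e_alternating (hr : 2 ≤ r) {m m' : EVar d r →₀ ℕ}
    (h : vertexDegrees m = vertexDegrees m') (t : Fin (2 * r - 2)) :
    ((t : ℕ) % 2 = 0 →
      m' (.e t) + m (.e ⟨0, by omega⟩) = m (.e t) + m' (.e ⟨0, by omega⟩)) ∧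
    ((t : ℕ) % 2 = 1 →
      m' (.e t) + m' (.e ⟨0, by omega⟩) = m (.e t) + m (.e ⟨0, by omega⟩)) := by
  obtain ⟨-, -, -, hz⟩ := (vertexDegrees_eq_iff hr).1 h
  obtain ⟨n, hn⟩ := t
  induction n with
  | zero => exact ⟨fun _ => add_comm _ _, fun h => absurd h (by norm_num)⟩
  | succ n ih =>
    have := hz ⟨n, by omega⟩
    have := ih (by omega)
    dsimp only at *
    omega

noncomputable def evenEExp : EVar d r →₀ ℕ :=
  ∑ t ∈ Finset.univ.filter (fun t : Fin (2 * r - 2) => t.val % 2 = 1), Finsupp.single (.e t) 1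

noncomputable def oddEExp : EVar d r →₀ ℕ :=
  ∑ t ∈ Finset.univ.filter (fun t : Fin (2 * r - 2) => t.val % 2 = 0), Finsupp.single (.e t) 1

theorem evenEProd_eq (k : Type) [Field k] : evenEProd k d r = monomial evenEExp 1 := by
  rw [evenEExp, monomial_sum_index, C_1, one_mul]
  rfl

theorem oddEProd_eq (k : Type) [Field k] : oddEProd k d r = monomial oddEExp 1 := by
  rw [oddEExp, monomial_sum_index, C_1, one_mul]
  rfl

@[simp] theorem evenEExp_a (i : Fin d) : evenEExp (r := r) (.a i) = 0 := by
  simp [evenEExp, Finsupp.finsetSum_apply]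

@[simp] theorem evenEExp_b (i : Fin d) : evenEExp (r := r) (.b i) = 0 := by
  simp [evenEExp, Finsupp.finsetSum_apply]

@[simp] theorem evenEExp_e (t : Fin (2 * r - 2)) :
    evenEExp (d := d) (.e t) = if (t : ℕ) % 2 = 1 then 1 else 0 := by
  simp [evenEExp, Finsupp.finsetSum_apply, Finsupp.single_apply]

@[simp] theorem oddEExp_a (i : Fin d) : oddEExp (r := r) (.a i) = 0 := by
  simp [oddEExp, Finsupp.finsetSum_apply]

@[simp] theorem oddEExp_b (i : Fin d) : oddEExp (r := r) (.b i) = 0 := by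
  simp [oddEExp, Finsupp.finsetSum_apply]

@[simp] theorem oddEExp_e (t : Fin (2 * r - 2)) :
    oddEExp (d := d) (.e t) = if (t : ℕ) % 2 = 0 then 1 else 0 := by
  simp [oddEExp, Finsupp.finsetSum_apply, Finsupp.single_apply]

theorem single_add_evenEExp_le {m : EVar d r →₀ ℕ} {i : Fin d} (hi : 0 < m (.a i))
    (he : ∀ t : Fin (2 * r - 2), (t : ℕ) % 2 = 1 → 0 < m (.e t)) :
    Finsupp.single (.a i) 1 + evenEExp ≤ m := by
  rintro (x | x | t) <;> simp only [Finsupp.add_apply, Finsupp.single_apply, evenEExp_a,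
    evenEExp_b, evenEExp_e, reduceCtorEq, EVar.a.injEq, if_false]
  · split_ifs <;> subst_vars <;> omega
  · omega
  · split_ifs with ht
    · exact he t ht
    · omega

theorem single_add_oddEExp_le {m : EVar d r →₀ ℕ} {i : Fin d} (hi : 0 < m (.b i))
    (he : ∀ t : Fin (2 * r - 2), (t : ℕ) % 2 = 0 → 0 < m (.e t)) :
    Finsupp.single (.b i) 1 + oddEExp ≤ m := by
  rintro (x | x | t) <;> simp only [Finsupp.add_apply, Finsupp.single_apply, oddEExp_a,
    oddEExp_b, oddEExp_e, reduceCtorEq, EVar.b.injEq, if_false]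
  · omega
  · split_ifs <;> subst_vars <;> omega
  · split_ifs with ht
    · exact he t ht
    · omega

theorem vertexDegrees_quad (i j : Fin d) :
    vertexDegrees (Finsupp.single (EVar.a (r := r) i) 1 + Finsupp.single (.b j) 1) =
      vertexDegrees (Finsupp.single (.b i) 1 + Finsupp.single (.a j) 1) := by
  simp only [map_add, Finsupp.linearCombination_single, one_smul, edgeExp_a, edgeExp_b]
  abel

theorem vertexDegrees_long (hr : 2 ≤ r) (i : Fin d) :
    vertexDegrees (Finsupp.single (EVar.a (r := r) i) 1 + evenEExp) =
      vertexDegrees (Finsupp.single (.b i) 1 + oddEExp) := by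
  rw [vertexDegrees_eq_iff hr]
  refine ⟨?_, ?_, fun x => ?_, fun s => ?_⟩ <;> simp [Finsupp.single_apply] <;> split_ifs <;>
    omega

def binomialGens (k : Type) [Field k] (d r : ℕ) : Set (MvPolynomial (EVar d r) k) :=
  {f | ∃ i j : Fin d, i < j ∧ f = X (EVar.a i) * X (EVar.b j) - X (EVar.b i) * X (EVar.a j)} ∪
    {f | ∃ i : Fin d, f = X (EVar.a i) * evenEProd k d r - X (EVar.b i) * oddEProd k d r}

variable (k : Type) [Field k]

theorem quad_mem_span {i j : Fin d} (hij : i ≠ j) :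
    monomial (Finsupp.single (EVar.a (r := r) i) 1 + Finsupp.single (.b j) 1) (1 : k) -
      monomial (Finsupp.single (.b i) 1 + Finsupp.single (.a j) 1) 1 ∈
      Ideal.span (binomialGens k d r) := by
  rcases hij.lt_or_gt with h | h
  · exact Ideal.subset_span (Or.inl ⟨i, j, h, by simp only [X, monomial_mul, mul_one]⟩)
  · rw [← neg_sub, add_comm (Finsupp.single (EVar.b i) 1),
      add_comm (Finsupp.single (EVar.a i) 1)]
    exact neg_mem <| Ideal.subset_span <|
      Or.inl ⟨j, i, h, by simp only [X, monomial_mul, mul_one]⟩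

theorem long_mem_span (i : Fin d) :
    monomial (Finsupp.single (EVar.a (r := r) i) 1 + evenEExp) (1 : k) -
      monomial (Finsupp.single (.b i) 1 + oddEExp) 1 ∈ Ideal.span (binomialGens k d r) :=
  Ideal.subset_span <| Or.inr
    ⟨i, by rw [evenEProd_eq, oddEProd_eq, X_mul_monomial_one, X_mul_monomial_one]⟩

variable {k}

theorem span_binomialGens_le_ker (hr : 2 ≤ r) :
    Ideal.span (binomialGens k d r) ≤
      RingHom.ker (aeval fun u => monomial (edgeExp u) (1 : k)) := by
  rw [Ideal.span_le]
  rintro f (⟨i, j, -, rfl⟩ | ⟨i, rfl⟩) <;> rw [SetLike.mem_coe]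
  · simpa only [X, monomial_mul, mul_one] using
      monomial_sub_monomial_mem_ker _ (vertexDegrees_quad i j)
  · simpa only [evenEProd_eq, oddEProd_eq, X_mul_monomial_one] using
      monomial_sub_monomial_mem_ker _ (vertexDegrees_long hr i)

theorem hasMoveToward_of_lt (hr : 2 ≤ r) {m m' : EVar d r →₀ ℕ}
    (h : vertexDegrees m = vertexDegrees m')
    (hlt : m (.e ⟨0, by omega⟩) < m' (.e ⟨0, by omega⟩)) :
    HasMoveToward edgeExp (Ideal.span (binomialGens k d r)) m m' := by
  obtain ⟨hx1, -, -, -⟩ := (vertexDegrees_eq_iff hr).1 h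
  obtain ⟨i, -, hi⟩ := Finset.sum_pos_iff.1 (show 0 < ∑ i, m (.a i) by omega)
  refine ⟨_, single_add_evenEExp_le hi fun t ht => ?_, _, vertexDegrees_long hr i,
    long_mem_span k i, .e ⟨0, by omega⟩, by simp, by omega⟩
  have := (e_alternating hr h t).2 ht
  omega

theorem hasMoveToward_of_gt (hr : 2 ≤ r) {m m' : EVar d r →₀ ℕ}
    (h : vertexDegrees m = vertexDegrees m')
    (hgt : m' (.e ⟨0, by omega⟩) < m (.e ⟨0, by omega⟩)) :
    HasMoveToward edgeExp (Ideal.span (binomialGens k d r)) m m' := by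
  obtain ⟨-, hx2, -, -⟩ := (vertexDegrees_eq_iff hr).1 h
  have hlast := (e_alternating hr h ⟨2 * r - 3, by omega⟩).2 (by dsimp only; omega)
  obtain ⟨i, -, hi⟩ := Finset.sum_pos_iff.1 (show 0 < ∑ i, m (.b i) by omega)
  refine ⟨_, single_add_oddEExp_le hi fun t ht => ?_, _, (vertexDegrees_long hr i).symm,
    ?_, .e ⟨1, by omega⟩, by simp, ?_⟩
  · have := (e_alternating hr h t).1 ht
    omega
  · rw [← neg_sub]
    exact neg_mem (long_mem_span k i)
  · have := (e_alternating hr h ⟨1, by omega⟩).2 rfl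
    omega

theorem hasMoveToward_of_eq (hr : 2 ≤ r) {m m' : EVar d r →₀ ℕ}
    (h : vertexDegrees m = vertexDegrees m')
    (heq : m (.e ⟨0, by omega⟩) = m' (.e ⟨0, by omega⟩)) (hne : m ≠ m') :
    HasMoveToward edgeExp (Ideal.span (binomialGens k d r)) m m' := by
  obtain ⟨hx1, -, hy, -⟩ := (vertexDegrees_eq_iff hr).1 h
  have he (t) : m (.e t) = m' (.e t) := by
    have := e_alternating hr h t
    omega
  have hsum : ∑ i, m (.a i) = ∑ i, m' (.a i) := by omega
  have hne' : (fun i => m (.a i)) ≠ fun i => m' (.a i) := by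
    intro ha
    refine hne (Finsupp.ext fun x => ?_)
    rcases x with x | x | t
    · exact congrFun ha x
    · have := congrFun ha x
      have := hy x
      omega
    · exact he t
  obtain ⟨i, hi⟩ := exists_lt_of_sum_eq_of_ne hsum hne'
  obtain ⟨j, hj⟩ := exists_lt_of_sum_eq_of_ne hsum.symm hne'.symm
  have hij : j ≠ i := by
    rintro rfl
    omega
  have hbi : 0 < m (.b i) := by
    have := hy i
    omega
  exact ⟨_, Finsupp.single_add_single_le (by simp) (by omega) hbi, _, vertexDegrees_quad j i,
    quad_mem_span k hij, .a i, by simp, by omega⟩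

theorem hasMoveToward (hr : 2 ≤ r) {m m' : EVar d r →₀ ℕ}
    (h : vertexDegrees m = vertexDegrees m') (hne : m ≠ m') :
    HasMoveToward edgeExp (Ideal.span (binomialGens k d r)) m m' := by
  rcases lt_trichotomy (m (.e ⟨0, by omega⟩)) (m' (.e ⟨0, by omega⟩)) with hlt | heq | hgt
  · exact hasMoveToward_of_lt hr h hlt
  · exact hasMoveToward_of_eq hr h heq hne
  · exact hasMoveToward_of_gt hr h hgt

end ToricGrd

theorem toric_ideal_Grd_generators_general (k : Type) [Field k] (d r : ℕ) (hr : 3 ≤ r) :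
    toricIdealGrd k d r =
      Ideal.span
        ({f | ∃ i j : Fin d, i < j ∧
            f = X (EVar.a i) * X (EVar.b j) - X (EVar.b i) * X (EVar.a j)} ∪
         {f | ∃ i : Fin d,
            f = X (EVar.a i) * evenEProd k d r - X (EVar.b i) * oddEProd k d r}) := by
  have hr₂ : 2 ≤ r := by omega
  change RingHom.ker (aeval (edgeImage k d r)) = Ideal.span (ToricGrd.binomialGens k d r)
  rw [ToricGrd.edgeImage_eq]
  exact le_antisymm
    (ker_aeval_monomial_le _ <| monomial_sub_monomial_mem_of_hasMoveToward _ fun _ _ h hne =>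
      ToricGrd.hasMoveToward hr₂ h hne)
    (ToricGrd.span_binomialGens_le_ker hr₂)

/-- For `r ≥ 3` and `d ≥ 2`, the toric ideal
`I_{G_{r,d}} ⊆ k[a_1,…,a_d,b_1,…,b_d,e_1,…,e_{2r-2}]` equals the ideal generated by
`{a_i b_j − b_i a_j : 1 ≤ i < j ≤ d} ∪ {a_i e_2 e_4 ⋯ e_{2r−2} − b_i e_1 e_3 ⋯ e_{2r−3} : 1 ≤ i ≤ d}`. -/
theorem toric_ideal_Grd_generators (k : Type) [Field k] (d r : ℕ) (hd : 2 ≤ d) (hr : 3 ≤ r) :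
    toricIdealGrd k d r =
      Ideal.span
        ({f | ∃ i j : Fin d, i < j ∧
            f = X (EVar.a i) * X (EVar.b j) - X (EVar.b i) * X (EVar.a j)} ∪
         {f | ∃ i : Fin d,
            f = X (EVar.a i) * evenEProd k d r - X (EVar.b i) * oddEProd k d r}) :=
  toric_ideal_Grd_generators_general k d r hr
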